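/- arXiv:1103.4540 — 2 statements merged into one kernel-verified Lean document; each statement's English description precedes it below -/
import Mathlib

section
/- For any interval graph G, there exists an interval graph G̃ such that G̃ contains G as an induced subgraph and G̃ is the phylogeny graph of a doubly partial order. -/
/-- `prec x y` means `x₁ < y₁` and `x₂ < y₂`, written `x ≺ y`. -/
def prec (x y : ℝ × ℝ) : Prop := x.1 < y.1 ∧ x.2 < y.2

/-- The phylogeny graph of the doubly partial order on a finite set
`V ⊆ ℝ²` (arcs `(x,v)` exactly when `v ≺ x`). -/
def phylogenyGraph (V : Finset (ℝ × ℝ)) : SimpleGraph {p : ℝ × ℝ // p ∈ V} where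
  Adj u v := u ≠ v ∧
    (prec u.1 v.1 ∨ prec v.1 u.1 ∨ ∃ z ∈ V, prec z u.1 ∧ prec z v.1)
  symm := by
    constructor
    intro u v h
    exact ⟨Ne.symm h.1, by tauto⟩
  loopless := by
    constructor
    intro u h
    exact h.1 rfl

/-- A graph is an interval graph if there is an assignment of closed real
intervals to its vertices such that distinct vertices are adjacent iff the
corresponding intervals intersect. -/
def IsIntervalGraph {α : Type*} (G : SimpleGraph α) : Prop :=
  ∃ J : α → Set ℝ,
    (∀ v, ∃ a b : ℝ, a ≤ b ∧ J v = Set.Icc a b) ∧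
    (∀ u w, u ≠ w → (G.Adj u w ↔ (J u ∩ J w).Nonempty))

/-!
Normalise an interval representation of `G` to integer endpoints `A v ≤ B v` and place the vertex
`v` at `(B v + ε v, -A v)`, with distinct `ε v ∈ (0, 1)` so that equal intervals still give
distinct points. For each left endpoint `t` add a prey point `(t, -t - 1)`: it lies below the point
of `v` exactly when `t ∈ [A v, B v]`, and nothing lies below it. Give every point `x` the interval
`[min (-x₂) x₁, x₁]`, i.e. `[A v, B v + ε v]` or `{t}`. Any prey of `x` has its left end in the
interval of `x`, so adjacent points have meeting intervals; conversely, if two intervals meet, the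
larger of their left ends is an integer `t` lying in both, and the prey point at `t` is a prey of
(or equal to) each of them.
-/

open Set Function

theorem Set.Icc_inter_Icc_nonempty_iff {α : Type*} [LinearOrder α] {a b c d : α}
    (hab : a ≤ b) (hcd : c ≤ d) : (Icc a b ∩ Icc c d).Nonempty ↔ a ≤ d ∧ c ≤ b := by
  rw [Icc_inter_Icc, nonempty_Icc, sup_le_iff, le_inf_iff, le_inf_iff]
  exact ⟨fun h => ⟨h.1.2, h.2.1⟩, fun h => ⟨⟨hab, h.1⟩, h.2, hcd⟩⟩

theorem Set.Infinite.exists_injective_forall_mem {α β : Type*} [Finite α] {s : Set β}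
    (hs : s.Infinite) : ∃ f : α → β, Injective f ∧ ∀ a, f a ∈ s := by
  have := Fintype.ofFinite α
  let e : α → ℕ := fun a => Fintype.equivFin α a
  let g := Set.Infinite.natEmbedding s hs
  refine ⟨fun a => g (e a), ?_, fun a => (g (e a)).2⟩
  exact Subtype.val_injective.comp <| g.injective.comp <|
    Fin.val_injective.comp (Fintype.equivFin α).injective

section IntCast

variable {R : Type*} [CommRing R] [LinearOrder R] [IsStrictOrderedRing R] {m n : ℤ} {ε : R}

theorem Int.cast_lt_add_iff_le (h0 : 0 < ε) (h1 : ε ≤ 1) : (m : R) < n + ε ↔ m ≤ n := by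
  refine ⟨fun h => ?_, fun h => ?_⟩
  · by_contra! hnm
    have : (n : R) + 1 ≤ m := by exact_mod_cast Int.add_one_le_iff.2 hnm
    linarith
  · have : (m : R) ≤ n := by exact_mod_cast h
    linarith

theorem Int.cast_le_add_iff_le (h0 : 0 ≤ ε) (h1 : ε < 1) : (m : R) ≤ n + ε ↔ m ≤ n := by
  refine ⟨fun h => ?_, fun h => ?_⟩
  · by_contra! hnm
    have : (n : R) + 1 ≤ m := by exact_mod_cast Int.add_one_le_iff.2 hnm
    linarith
  · have : (m : R) ≤ n := by exact_mod_cast h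
    linarith

end IntCast

theorem IsIntervalGraph.exists_int_endpoints {α : Type*} [Finite α] {G : SimpleGraph α}
    (hG : IsIntervalGraph G) : ∃ A B : α → ℤ, (∀ v, A v ≤ B v) ∧
      ∀ u w, u ≠ w → (G.Adj u w ↔ A u ≤ B w ∧ A w ≤ B u) := by
  have := Fintype.ofFinite α
  obtain ⟨J, hJ, hadj⟩ := hG
  choose a b hab hJ using hJ
  set E : Finset ℝ := Finset.univ.image a ∪ Finset.univ.image b
  have ha : ∀ v, a v ∈ E := by simp [E]
  have hb : ∀ v, b v ∈ E := by simp [E]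
  let rank : E → ℤ := fun x => ((E.orderIsoOfFin rfl).symm x : ℕ)
  have rank_le_rank : ∀ x y, rank x ≤ rank y ↔ x ≤ y := fun x y => by
    simp only [rank, Nat.cast_le, Fin.val_fin_le, OrderIso.le_iff_le]
  refine ⟨fun v => rank ⟨a v, ha v⟩, fun v => rank ⟨b v, hb v⟩,
    fun v => (rank_le_rank _ _).2 (hab v), fun u w huw => ?_⟩
  rw [hadj u w huw, hJ, hJ, Icc_inter_Icc_nonempty_iff (hab u) (hab w), rank_le_rank,
    rank_le_rank, Subtype.mk_le_mk, Subtype.mk_le_mk]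

namespace IntervalPhylogeny

variable {α : Type*} {A B : α → ℤ} {ε : α → ℝ}

variable (A B ε) in
def vertexPoint (v : α) : ℝ × ℝ := (B v + ε v, -A v)

def preyPoint (t : ℤ) : ℝ × ℝ := (t, -t - 1)

def lowerEnd (x : ℝ × ℝ) : ℝ := min (-x.2) x.1

def pointInterval (x : ℝ × ℝ) : Set ℝ := Icc (lowerEnd x) x.1

theorem lowerEnd_mem_pointInterval (x : ℝ × ℝ) : lowerEnd x ∈ pointInterval x :=
  left_mem_Icc.2 (min_le_right _ _)

theorem lowerEnd_vertexPoint (hAB : ∀ v, A v ≤ B v) (hε : ∀ v, ε v ∈ Ioo 0 1) (v : α) :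
    lowerEnd (vertexPoint A B ε v) = A v := by
  have : (A v : ℝ) ≤ B v := by exact_mod_cast hAB v
  simp only [lowerEnd, vertexPoint, neg_neg]
  exact min_eq_left (by linarith [(hε v).1])

theorem lowerEnd_preyPoint (t : ℤ) : lowerEnd (preyPoint t) = t := by
  simp only [lowerEnd, preyPoint]
  exact min_eq_right (by linarith)

theorem pointInterval_vertexPoint (hAB : ∀ v, A v ≤ B v) (hε : ∀ v, ε v ∈ Ioo 0 1) (v : α) :
    pointInterval (vertexPoint A B ε v) = Icc (A v : ℝ) (B v + ε v) := by
  rw [pointInterval, lowerEnd_vertexPoint hAB hε]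
  rfl

theorem pointInterval_preyPoint (t : ℤ) : pointInterval (preyPoint t) = {(t : ℝ)} := by
  rw [pointInterval, lowerEnd_preyPoint, preyPoint, Icc_self]

theorem prec_preyPoint_vertexPoint_iff (hAB : ∀ v, A v ≤ B v) (hε : ∀ v, ε v ∈ Ioo 0 1)
    (t : ℤ) (v : α) :
    prec (preyPoint t) (vertexPoint A B ε v) ↔ (t : ℝ) ∈ pointInterval (vertexPoint A B ε v) := by
  obtain ⟨hε0, hε1⟩ := hε v
  rw [pointInterval_vertexPoint hAB hε, mem_Icc, prec, preyPoint, vertexPoint,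
    Int.cast_lt_add_iff_le hε0 hε1.le, Int.cast_le_add_iff_le hε0.le hε1, Int.cast_le,
    and_comm]
  refine and_congr_left' ?_
  change -(t : ℝ) - 1 < -(A v) ↔ _
  rw [← Int.lt_add_one_iff, ← Int.cast_lt (R := ℝ), Int.cast_add, Int.cast_one]
  constructor <;> intro h <;> linarith

theorem vertexPoint_injective (hε : ∀ v, ε v ∈ Ioo 0 1) (hε_inj : Injective ε) :
    Injective (vertexPoint A B ε) := by
  intro u v h
  have h1 : (B u : ℝ) + ε u = B v + ε v := congrArg Prod.fst h
  have hB : B u = B v := le_antisymm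
    ((Int.cast_le_add_iff_le (hε v).1.le (hε v).2).1 (by linarith [(hε u).1]))
    ((Int.cast_le_add_iff_le (hε u).1.le (hε u).2).1 (by linarith [(hε v).1]))
  rw [hB] at h1
  exact hε_inj (add_left_cancel h1)

theorem pointInterval_vertexPoint_inter_nonempty_iff (hAB : ∀ v, A v ≤ B v)
    (hε : ∀ v, ε v ∈ Ioo 0 1) (u v : α) :
    (pointInterval (vertexPoint A B ε u) ∩ pointInterval (vertexPoint A B ε v)).Nonempty ↔
      A u ≤ B v ∧ A v ≤ B u := by
  have hle : ∀ w, (A w : ℝ) ≤ B w + ε w := fun w =>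
    (Int.cast_le_add_iff_le (hε w).1.le (hε w).2).2 (hAB w)
  rw [pointInterval_vertexPoint hAB hε, pointInterval_vertexPoint hAB hε,
    Icc_inter_Icc_nonempty_iff (hle u) (hle v), Int.cast_le_add_iff_le (hε v).1.le (hε v).2,
    Int.cast_le_add_iff_le (hε u).1.le (hε u).2]

variable [Fintype α]

variable (A B ε) in
noncomputable def points : Finset (ℝ × ℝ) :=
  Finset.univ.image (vertexPoint A B ε) ∪ Finset.univ.image (preyPoint ∘ A)

theorem mem_points {x : ℝ × ℝ} :
    x ∈ points A B ε ↔ (∃ v, vertexPoint A B ε v = x) ∨ ∃ v, preyPoint (A v) = x := by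
  simp [points]

theorem vertexPoint_mem_points (v : α) : vertexPoint A B ε v ∈ points A B ε :=
  mem_points.2 (Or.inl ⟨v, rfl⟩)

theorem preyPoint_mem_points (v : α) : preyPoint (A v) ∈ points A B ε :=
  mem_points.2 (Or.inr ⟨v, rfl⟩)

theorem exists_lowerEnd_eq (hAB : ∀ v, A v ≤ B v) (hε : ∀ v, ε v ∈ Ioo 0 1)
    {x : ℝ × ℝ} (hx : x ∈ points A B ε) :
    ∃ t : ℤ, lowerEnd x = t ∧ preyPoint t ∈ points A B ε := by
  rcases mem_points.1 hx with ⟨v, rfl⟩ | ⟨v, rfl⟩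
  · exact ⟨A v, lowerEnd_vertexPoint hAB hε v, preyPoint_mem_points v⟩
  · exact ⟨A v, lowerEnd_preyPoint _, preyPoint_mem_points v⟩

theorem not_prec_preyPoint_preyPoint (s t : ℤ) : ¬ prec (preyPoint s) (preyPoint t) := by
  rintro ⟨h1, h2⟩
  simp only [preyPoint] at h1 h2
  linarith

theorem not_prec_preyPoint (hAB : ∀ v, A v ≤ B v) (hε : ∀ v, ε v ∈ Ioo 0 1)
    {x : ℝ × ℝ} (hx : x ∈ points A B ε) (t : ℤ) : ¬ prec x (preyPoint t) := by
  rintro ⟨h1, h2⟩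
  rcases mem_points.1 hx with ⟨v, rfl⟩ | ⟨v, rfl⟩
  · have : (A v : ℝ) ≤ B v := by exact_mod_cast hAB v
    simp only [vertexPoint, preyPoint] at h1 h2
    linarith [(hε v).1]
  · exact not_prec_preyPoint_preyPoint _ _ ⟨h1, h2⟩

theorem intCast_mem_pointInterval_iff (hAB : ∀ v, A v ≤ B v) (hε : ∀ v, ε v ∈ Ioo 0 1)
    {x : ℝ × ℝ} (hx : x ∈ points A B ε) (t : ℤ) :
    (t : ℝ) ∈ pointInterval x ↔ x = preyPoint t ∨ prec (preyPoint t) x := by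
  refine ⟨fun ht => ?_, ?_⟩
  · rcases mem_points.1 hx with ⟨v, rfl⟩ | ⟨v, rfl⟩
    · exact Or.inr ((prec_preyPoint_vertexPoint_iff hAB hε t v).2 ht)
    · rw [pointInterval_preyPoint, mem_singleton_iff, Int.cast_inj] at ht
      exact Or.inl (ht ▸ rfl)
  · rintro (rfl | h)
    · rw [pointInterval_preyPoint]
      exact mem_singleton _
    · rcases mem_points.1 hx with ⟨v, rfl⟩ | ⟨v, rfl⟩
      · exact (prec_preyPoint_vertexPoint_iff hAB hε t v).1 h
      · exact absurd h (not_prec_preyPoint_preyPoint _ _)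

theorem lowerEnd_mem_pointInterval_of_prec (hAB : ∀ v, A v ≤ B v) (hε : ∀ v, ε v ∈ Ioo 0 1)
    {z x : ℝ × ℝ} (hz : z ∈ points A B ε) (hx : x ∈ points A B ε) (h : prec z x) :
    lowerEnd z ∈ pointInterval x := by
  rcases mem_points.1 hx with ⟨v, rfl⟩ | ⟨v, rfl⟩
  · rcases mem_points.1 hz with ⟨w, rfl⟩ | ⟨w, rfl⟩
    · obtain ⟨h1, h2⟩ := h
      have : (A w : ℝ) ≤ B w := by exact_mod_cast hAB w
      simp only [vertexPoint] at h1 h2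
      rw [lowerEnd_vertexPoint hAB hε, pointInterval_vertexPoint hAB hε]
      constructor <;> linarith [(hε w).1]
    · rw [lowerEnd_preyPoint]
      exact (prec_preyPoint_vertexPoint_iff hAB hε _ v).1 h
  · exact absurd h (not_prec_preyPoint hAB hε hz _)

theorem phylogenyGraph_adj_iff (hAB : ∀ v, A v ≤ B v) (hε : ∀ v, ε v ∈ Ioo 0 1)
    {x y : points A B ε} (hxy : x ≠ y) :
    (phylogenyGraph (points A B ε)).Adj x y ↔ (pointInterval x ∩ pointInterval y).Nonempty := by
  constructor
  · rintro ⟨-, h | h | ⟨z, hz, hzx, hzy⟩⟩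
    · exact ⟨_, lowerEnd_mem_pointInterval _, lowerEnd_mem_pointInterval_of_prec hAB hε x.2 y.2 h⟩
    · exact ⟨_, lowerEnd_mem_pointInterval_of_prec hAB hε y.2 x.2 h, lowerEnd_mem_pointInterval _⟩
    · exact ⟨_, lowerEnd_mem_pointInterval_of_prec hAB hε hz x.2 hzx,
        lowerEnd_mem_pointInterval_of_prec hAB hε hz y.2 hzy⟩
  · intro hmeet
    have hmax : max (lowerEnd x) (lowerEnd y) ∈ pointInterval x ∩ pointInterval y := by
      rw [pointInterval, pointInterval, Icc_inter_Icc] at hmeet ⊢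
      exact left_mem_Icc.2 (nonempty_Icc.1 hmeet)
    obtain ⟨t, ht, htV⟩ :
        ∃ t : ℤ, max (lowerEnd x) (lowerEnd y) = t ∧ preyPoint t ∈ points A B ε := by
      rcases max_choice (lowerEnd x) (lowerEnd y) with h | h <;> rw [h]
      exacts [exists_lowerEnd_eq hAB hε x.2, exists_lowerEnd_eq hAB hε y.2]
    rw [ht] at hmax
    refine ⟨hxy, ?_⟩
    rcases (intCast_mem_pointInterval_iff hAB hε x.2 t).1 hmax.1 with hx | hx <;>
      rcases (intCast_mem_pointInterval_iff hAB hε y.2 t).1 hmax.2 with hy | hy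
    · exact absurd (Subtype.ext (hx.trans hy.symm)) hxy
    · exact Or.inl (hx ▸ hy)
    · exact Or.inr (Or.inl (hy ▸ hx))
    · exact Or.inr (Or.inr ⟨_, htV, hx, hy⟩)

theorem isIntervalGraph_phylogenyGraph (hAB : ∀ v, A v ≤ B v) (hε : ∀ v, ε v ∈ Ioo 0 1) :
    IsIntervalGraph (phylogenyGraph (points A B ε)) :=
  ⟨fun x => pointInterval x, fun _ => ⟨_, _, min_le_right _ _, rfl⟩,
    fun _ _ hxy => phylogenyGraph_adj_iff hAB hε hxy⟩

theorem phylogenyGraph_adj_vertexPoint_iff (hAB : ∀ v, A v ≤ B v) (hε : ∀ v, ε v ∈ Ioo 0 1)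
    (hε_inj : Injective ε) {u v : α} (huv : u ≠ v) :
    (phylogenyGraph (points A B ε)).Adj ⟨_, vertexPoint_mem_points u⟩
      ⟨_, vertexPoint_mem_points v⟩ ↔ A u ≤ B v ∧ A v ≤ B u :=
  (phylogenyGraph_adj_iff hAB hε fun h => huv (vertexPoint_injective hε hε_inj
    (congrArg Subtype.val h))).trans (pointInterval_vertexPoint_inter_nonempty_iff hAB hε u v)

end IntervalPhylogeny

open IntervalPhylogeny

/-- For any (finite) interval graph `G` there is an interval graph `G̃` which
contains `G` as an induced subgraph and which is the phylogeny graph of a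
doubly partial order. -/
theorem exists_phylogeny_extension_of_intervalGraph {α : Type*} [Fintype α]
    (G : SimpleGraph α) (hG : IsIntervalGraph G) :
    ∃ V : Finset (ℝ × ℝ),
      IsIntervalGraph (phylogenyGraph V) ∧
      ∃ f : α ↪ {p : ℝ × ℝ // p ∈ V},
        ∀ a b : α, (phylogenyGraph V).Adj (f a) (f b) ↔ G.Adj a b := by
  obtain ⟨A, B, hAB, hadj⟩ := hG.exists_int_endpoints
  obtain ⟨ε, hε_inj, hε⟩ := (Ioo_infinite (zero_lt_one' ℝ)).exists_injective_forall_mem (α := α)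
  refine ⟨points A B ε, isIntervalGraph_phylogenyGraph hAB hε,
    ⟨fun v => ⟨_, vertexPoint_mem_points v⟩,
      fun u v h => vertexPoint_injective hε hε_inj (congrArg Subtype.val h)⟩, fun u v => ?_⟩
  rcases eq_or_ne u v with rfl | huv
  · simp
  · exact (phylogenyGraph_adj_vertexPoint_iff hAB hε hε_inj huv).trans (hadj u v huv).symm
end

section
/- The path P on four vertices (the path graph a–u–v–b of length three) is not the phylogeny graph of any doubly partial order: there is no doubly partial order D such that P(D) is isomorphic to the path graph on 4 vertices. -/
/-!
A path is triangle-free, and in a triangle-free phylogeny graph a common prey would form a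
triangle, so every edge is an arc of `D`. If `x – y – z` is an induced path with both edges
arcs, then `y` must lie above both `x` and `z`: otherwise `x ≺ y ≺ z` (or the reverse) makes
`x z` an arc by transitivity, or `y ≺ x, z` makes `y` a common prey. Applied to `a – u – v`
and to `u – v – b`, this gives `v ≺ u` and `u ≺ v`.
-/

open SimpleGraph

lemma prec_trans {x y z : ℝ × ℝ} (hxy : prec x y) (hyz : prec y z) : prec x z :=
  ⟨hxy.1.trans hyz.1, hxy.2.trans hyz.2⟩

lemma prec_asymm {x y : ℝ × ℝ} (hxy : prec x y) : ¬ prec y x :=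
  fun hyx => lt_asymm hxy.1 hyx.1

lemma prec_irrefl (x : ℝ × ℝ) : ¬ prec x x :=
  fun h => lt_irrefl _ h.1

namespace phylogenyGraph

variable {V : Finset (ℝ × ℝ)} {x y z : {p : ℝ × ℝ // p ∈ V}}

lemma adj_of_prec (h : prec x.1 y.1) : (phylogenyGraph V).Adj x y :=
  ⟨by rintro rfl; exact prec_irrefl _ h, Or.inl h⟩

lemma adj_of_common_prey (hxz : x ≠ z) (hyx : prec y.1 x.1) (hyz : prec y.1 z.1) :
    (phylogenyGraph V).Adj x z :=
  ⟨hxz, Or.inr (Or.inr ⟨y.1, y.2, hyx, hyz⟩)⟩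

lemma prec_or_prec_of_adj (hfree : (phylogenyGraph V).CliqueFree 3)
    (hxy : (phylogenyGraph V).Adj x y) : prec x.1 y.1 ∨ prec y.1 x.1 := by
  rcases hxy.2 with h | h | ⟨p, hp, hpx, hpy⟩
  · exact Or.inl h
  · exact Or.inr h
  · exact (hfree {x, y, ⟨p, hp⟩} (is3Clique_triple_iff.2
      ⟨hxy, (adj_of_prec hpx).symm, (adj_of_prec hpy).symm⟩)).elim

lemma prec_and_prec_of_not_adj (hfree : (phylogenyGraph V).CliqueFree 3)
    (hxy : (phylogenyGraph V).Adj x y) (hyz : (phylogenyGraph V).Adj y z) (hxz : x ≠ z)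
    (hnxz : ¬ (phylogenyGraph V).Adj x z) : prec x.1 y.1 ∧ prec z.1 y.1 := by
  rcases prec_or_prec_of_adj hfree hxy with hxy' | hyx
  · rcases prec_or_prec_of_adj hfree hyz with hyz' | hzy
    · exact (hnxz (adj_of_prec (prec_trans hxy' hyz'))).elim
    · exact ⟨hxy', hzy⟩
  · rcases prec_or_prec_of_adj hfree hyz with hyz' | hzy
    · exact (hnxz (adj_of_common_prey hxz hyx hyz')).elim
    · exact (hnxz (adj_of_prec (prec_trans hzy hyx)).symm).elim

theorem not_pathGraph_four_isIndContained (hfree : (phylogenyGraph V).CliqueFree 3) :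
    ¬ pathGraph 4 ⊴ phylogenyGraph V := by
  rintro ⟨f⟩
  have adj : ∀ i j : Fin 4,
      (phylogenyGraph V).Adj (f i) (f j) ↔ (i.val + 1 = j ∨ j.val + 1 = i) :=
    fun i j => f.map_adj_iff.trans pathGraph_adj
  have hvu := prec_and_prec_of_not_adj hfree ((adj 0 1).2 (by decide)) ((adj 1 2).2 (by decide))
    (f.injective.ne (by decide)) (by rw [adj]; decide)
  have huv := prec_and_prec_of_not_adj hfree ((adj 1 2).2 (by decide)) ((adj 2 3).2 (by decide))
    (f.injective.ne (by decide)) (by rw [adj]; decide)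
  exact prec_asymm hvu.2 huv.1

end phylogenyGraph

/-- The path on four vertices is not the phylogeny graph of any doubly
partial order. -/
theorem pathGraph_four_not_phylogeny :
    ¬ ∃ V : Finset (ℝ × ℝ),
      Nonempty (phylogenyGraph V ≃g SimpleGraph.pathGraph 4) := by
  rintro ⟨V, ⟨e⟩⟩
  have hfree : (phylogenyGraph V).CliqueFree 3 :=
    ((pathGraph.bicoloring 4).colorable.cliqueFree (by norm_num)).comap e.isContained
  exact phylogenyGraph.not_pathGraph_four_isIndContained hfree e.symm.isIndContained
end
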